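/- Suppose (G, 𝒫) is a relatively hyperbolic group pair. Then 𝒫 is C-almost malnormal for some constant C. -/

import Mathlib

/-
Common definitions for formalizing "Connectedness of Bowditch Boundary of Dehn Fillings"
(Dasgupta).  We set up: Gromov hyperbolic graphs (four--point condition on the graph
metric), the Groves--Manning combinatorial cusped space, relative hyperbolicity of a
group pair, the Gromov (Bowditch) boundary of the cusped space, parabolic / two-ended /
elementary subgroups, actions on simplicial trees and splittings (relative to a
peripheral collection), acylindricity, peripheral splittings, the constant C(G,𝓟),
almost malnormality, ends of groups, Dehn fillings and "sufficiently long" fillings,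
and actions on ℝ-trees.
-/

open scoped Pointwise

universe u

noncomputable section

namespace RelHypDehn

/-! ### Gromov hyperbolicity of graphs -/

/-- The Gromov product of `x` and `y` at `w`, with respect to the combinatorial
(graph) metric of `X`. -/
def gromovProd {V : Type*} (X : SimpleGraph V) (x y w : V) : ℝ :=
  ((X.dist x w : ℝ) + (X.dist y w : ℝ) - (X.dist x y : ℝ)) / 2

/-- A graph is Gromov hyperbolic if its graph metric satisfies the four-point
condition for some δ ≥ 0. -/
def IsHyperbolicGraph {V : Type*} (X : SimpleGraph V) : Prop :=
  ∃ δ : ℝ, 0 ≤ δ ∧ ∀ x y z w : V,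
    min (gromovProd X x z w) (gromovProd X z y w) - δ ≤ gromovProd X x y w

/-! ### The cusped space of a group pair -/

/-- The ball of radius `k` in the word metric determined by the (symmetrized)
generating set `T`. -/
def wordBall {G : Type u} [Group G] (T : Set G) (k : ℕ) : Set G :=
  {g | ∃ l : List G, l.length ≤ k ∧ (∀ a ∈ l, a ∈ T ∨ a⁻¹ ∈ T) ∧ l.prod = g}

variable {G : Type u} [Group G]

/-- Vertices of the cusped space: the vertices of the Cayley graph of `G`, together
with, for each `P ∈ 𝓟`, each `x ∈ G` and each depth `n` (representing depth `n+1`),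
a vertex `(P, x, n)` of the combinatorial horoball over the coset `x P`. -/
abbrev CuspedVertex (G : Type u) [Group G] (𝓟 : Set (Subgroup G)) : Type u :=
  G ⊕ (𝓟 × G × ℕ)

/-- Adjacency in the Groves–Manning cusped space: Cayley edges, vertical horoball
edges, edges joining depth-one horoball vertices to the Cayley graph, and horizontal
horoball edges at depth `n+1` joining coset elements at distance at most `2^(n+1)`
in the word metric of the peripheral subgroup. -/
def cuspedRel (𝓟 : Set (Subgroup G)) (S : Set G) :
    CuspedVertex G 𝓟 → CuspedVertex G 𝓟 → Prop
  | Sum.inl x, Sum.inl y => x⁻¹ * y ∈ S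
  | Sum.inl x, Sum.inr ⟨_, y, n⟩ => x = y ∧ n = 0
  | Sum.inr ⟨_, x, n⟩, Sum.inl y => x = y ∧ n = 0
  | Sum.inr ⟨P, x, n⟩, Sum.inr ⟨Q, y, m⟩ =>
      P = Q ∧ ((x = y ∧ m = n + 1) ∨
        (n = m ∧ x⁻¹ * y ∈ wordBall (S ∩ (P.1 : Set G)) (2 ^ (n + 1))))

/-- The cusped space of the pair `(G, 𝓟)` with respect to the generating set `S`. -/
def cuspedGraph (𝓟 : Set (Subgroup G)) (S : Set G) : SimpleGraph (CuspedVertex G 𝓟) :=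
  SimpleGraph.fromRel (cuspedRel 𝓟 S)

/-- `S` is a finite generating set of `G` adapted to `𝓟`: it generates `G` and
`S ∩ P` generates `P` for each `P ∈ 𝓟`. -/
def Adapted (G : Type u) [Group G] (𝓟 : Set (Subgroup G)) (S : Finset G) : Prop :=
  Subgroup.closure (S : Set G) = ⊤ ∧
    ∀ P ∈ 𝓟, Subgroup.closure ((S : Set G) ∩ (P : Set G)) = P

/-- The pair `(G, 𝓟)` is relatively hyperbolic: `𝓟` is a finite collection of proper
subgroups, and for some adapted finite generating set the cusped space is Gromov
hyperbolic. -/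
def IsRelHyp (G : Type u) [Group G] (𝓟 : Set (Subgroup G)) : Prop :=
  𝓟.Finite ∧ (∀ P ∈ 𝓟, P ≠ ⊤) ∧
    ∃ S : Finset G, Adapted G 𝓟 S ∧ IsHyperbolicGraph (cuspedGraph 𝓟 (S : Set G))

/-! ### Gromov boundary of a hyperbolic graph -/

/-- A sequence converges at infinity if its Gromov products (at the basepoint `o`)
go to infinity. -/
def ConvergesAtInfinity {V : Type*} (X : SimpleGraph V) (o : V) (s : ℕ → V) : Prop :=
  ∀ M : ℝ, ∃ N : ℕ, ∀ m ≥ N, ∀ n ≥ N, M ≤ gromovProd X (s m) (s n) o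

/-- Two sequences converging at infinity are identified if their mutual Gromov
products go to infinity. -/
def seqRel {V : Type*} (X : SimpleGraph V) (o : V)
    (s t : {s : ℕ → V // ConvergesAtInfinity X o s}) : Prop :=
  ∀ M : ℝ, ∃ N : ℕ, ∀ m ≥ N, ∀ n ≥ N, M ≤ gromovProd X (s.1 m) (t.1 n) o

/-- The Gromov boundary of the graph `X` (for the cusped space of a relatively
hyperbolic pair this is the Bowditch boundary). -/
def GromovBoundary {V : Type*} (X : SimpleGraph V) (o : V) : Type _ :=
  Quot (seqRel X o)

/-- Extension of the Gromov product to the boundary. -/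
def boundaryProd {V : Type*} (X : SimpleGraph V) (o : V)
    (ξ η : GromovBoundary X o) : EReal :=
  ⨅ (s : {s : {s : ℕ → V // ConvergesAtInfinity X o s} // Quot.mk (seqRel X o) s = ξ})
    (t : {t : {t : ℕ → V // ConvergesAtInfinity X o t} // Quot.mk (seqRel X o) t = η}),
    Filter.liminf
      (fun p : ℕ × ℕ => ((gromovProd X (s.1.1 p.1) (t.1.1 p.2) o : ℝ) : EReal))
      Filter.atTop

/-- The topology on the Gromov boundary, generated by the standard basic
neighborhoods `{η | (ξ|η) > M}`. -/
instance gromovBoundaryTopology {V : Type*} (X : SimpleGraph V) (o : V) :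
    TopologicalSpace (GromovBoundary X o) :=
  TopologicalSpace.generateFrom
    {U | ∃ (ξ : GromovBoundary X o) (M : ℝ), U = {η | (M : EReal) < boundaryProd X o ξ η}}

/-- A topological space has a cut point if removing some point disconnects it. -/
def HasCutPoint (Z : Type*) [TopologicalSpace Z] : Prop :=
  ∃ z : Z, ¬ IsPreconnected ({z}ᶜ : Set Z)

/-- A topological space has no cut points. -/
def NoCutPoints (Z : Type*) [TopologicalSpace Z] : Prop :=
  ∀ z : Z, IsPreconnected ({z}ᶜ : Set Z)

/-- The Bowditch boundary of `(G, 𝓟)` is connected (for every adapted generating set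
witnessing relative hyperbolicity). -/
def BoundaryConnected (G : Type u) [Group G] (𝓟 : Set (Subgroup G)) : Prop :=
  ∀ S : Finset G, Adapted G 𝓟 S → IsHyperbolicGraph (cuspedGraph 𝓟 (S : Set G)) →
    ConnectedSpace (GromovBoundary (cuspedGraph 𝓟 (S : Set G)) (Sum.inl 1))

/-- The Bowditch boundary of `(G, 𝓟)` is connected and has no cut point. -/
def BoundaryConnNoCut (G : Type u) [Group G] (𝓟 : Set (Subgroup G)) : Prop :=
  ∀ S : Finset G, Adapted G 𝓟 S → IsHyperbolicGraph (cuspedGraph 𝓟 (S : Set G)) →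
    ConnectedSpace (GromovBoundary (cuspedGraph 𝓟 (S : Set G)) (Sum.inl 1)) ∧
      NoCutPoints (GromovBoundary (cuspedGraph 𝓟 (S : Set G)) (Sum.inl 1))

/-! ### Parabolic, two-ended, elementary subgroups -/

/-- The conjugate `g P g⁻¹` of a subgroup. -/
def conjSubgroup (g : G) (P : Subgroup G) : Subgroup G :=
  Subgroup.map (MulAut.conj g).toMonoidHom P

/-- A subgroup is parabolic if it is contained in a conjugate of a member of `𝓟`. -/
def IsParabolic (𝓟 : Set (Subgroup G)) (H : Subgroup G) : Prop :=
  ∃ P ∈ 𝓟, ∃ g : G, H ≤ conjSubgroup g P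

/-- A subgroup is two-ended iff it is virtually infinite cyclic. -/
def IsTwoEnded (H : Subgroup G) : Prop :=
  ∃ K : Subgroup G, K ≤ H ∧ Infinite K ∧ IsCyclic K ∧ (K.subgroupOf H).FiniteIndex

/-- A subgroup of a relatively hyperbolic pair is elementary if it is finite,
two-ended, or parabolic. -/
def IsElementary (𝓟 : Set (Subgroup G)) (H : Subgroup G) : Prop :=
  Finite H ∨ IsTwoEnded H ∨ IsParabolic 𝓟 H

/-- A maximal parabolic subgroup. -/
def IsMaxParabolic (𝓟 : Set (Subgroup G)) (M : Subgroup G) : Prop :=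
  IsParabolic 𝓟 M ∧ ∀ M' : Subgroup G, IsParabolic 𝓟 M' → M ≤ M' → M' = M

/-- The family of subgroups entering the definition of the constant `C(G,𝓟)`:
finite non-parabolic subgroups, and subgroups contained in the intersection of two
distinct maximal parabolic subgroups. -/
def CFamily (𝓟 : Set (Subgroup G)) : Set (Subgroup G) :=
  {F | (Finite F ∧ ¬ IsParabolic 𝓟 F) ∨
    ∃ M₁ M₂ : Subgroup G, IsMaxParabolic 𝓟 M₁ ∧ IsMaxParabolic 𝓟 M₂ ∧ M₁ ≠ M₂ ∧
      F ≤ M₁ ⊓ M₂}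

/-- The constant `C(G, 𝓟) = max { |F| : F ∈ CFamily }`. -/
def CGP (G : Type u) [Group G] (𝓟 : Set (Subgroup G)) : ℕ :=
  sSup {n : ℕ | ∃ F ∈ CFamily 𝓟, Nat.card F = n}

/-- A collection `𝓟` of subgroups is `C`-almost malnormal if
`|P₁ ∩ g P₂ g⁻¹| > C` implies `P₁ = P₂` and `g ∈ P₁`.  (Cardinality `> C` is
expressed by the existence of a finite subset with more than `C` elements, which is
also correct for infinite intersections.) -/
def AlmostMalnormal (𝓟 : Set (Subgroup G)) (C : ℕ) : Prop :=
  ∀ P₁ ∈ 𝓟, ∀ P₂ ∈ 𝓟, ∀ g : G,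
    (∃ t : Finset G, (t : Set G) ⊆ ((P₁ ⊓ conjSubgroup g P₂ : Subgroup G) : Set G) ∧
      C < t.card) →
    P₁ = P₂ ∧ g ∈ P₁

/-! ### Actions on simplicial trees and splittings -/

/-- An action of `G` by automorphisms on a simplicial tree. -/
structure GTreeAction (G : Type u) [Group G] where
  /-- the vertex set -/
  V : Type u
  /-- the graph -/
  graph : SimpleGraph V
  /-- the graph is a tree -/
  isTree : graph.IsTree
  /-- the action, as a homomorphism to permutations of the vertices -/
  act : G →* Equiv.Perm V
  /-- the action preserves adjacency -/
  adj_act : ∀ (g : G) (u v : V), graph.Adj u v → graph.Adj (act g u) (act g v)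

namespace GTreeAction

variable (T : GTreeAction G)

/-- Stabilizer of a vertex. -/
def stab (v : T.V) : Subgroup G where
  carrier := {g | T.act g v = v}
  one_mem' := by simp
  mul_mem' := by
    intro a b ha hb
    simp only [Set.mem_setOf_eq, map_mul, Equiv.Perm.mul_apply] at *
    rw [hb, ha]
  inv_mem' := by
    intro a ha
    simp only [Set.mem_setOf_eq] at *
    conv_lhs => rw [← ha]
    rw [← Equiv.Perm.mul_apply, ← map_mul, inv_mul_cancel, map_one, Equiv.Perm.one_apply]

/-- Pointwise stabilizer of the pair `{u, v}`; in a tree this is the pointwise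
stabilizer of the geodesic segment from `u` to `v`. -/
def pairStab (u v : T.V) : Subgroup G := T.stab u ⊓ T.stab v

/-- The action has no inversions. -/
def NoInversions : Prop :=
  ∀ (g : G) (u v : T.V), T.graph.Adj u v → T.act g u = v → T.act g v ≠ u

/-- The action has no global fixed point (i.e. the splitting is nontrivial). -/
def NoGlobalFix : Prop := ¬ ∃ v : T.V, ∀ g : G, T.act g v = v

/-- The action is minimal: there is no proper invariant subtree. -/
def Minimal : Prop :=
  ∀ W : Set T.V, W.Nonempty → (∀ g : G, ∀ v ∈ W, T.act g v ∈ W) →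
    (T.graph.induce W).Connected → W = Set.univ

/-- All edge stabilizers belong to the class `𝒜`. -/
def EdgesIn (𝒜 : Set (Subgroup G)) : Prop :=
  ∀ u v : T.V, T.graph.Adj u v → T.pairStab u v ∈ 𝒜

/-- Each member of `𝓟` fixes a vertex. -/
def Relative (𝓟 : Set (Subgroup G)) : Prop :=
  ∀ P ∈ 𝓟, ∃ v : T.V, ∀ p ∈ P, T.act p v = v

/-- The action is `(k, C)`-acylindrical: the pointwise stabilizer of any segment of
length at least `k + 1` has cardinality at most `C`. -/
def Acyl (k C : ℕ) : Prop :=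
  ∀ u v : T.V, k + 1 ≤ T.graph.dist u v →
    ∀ t : Finset G, (t : Set G) ⊆ ((T.pairStab u v : Subgroup G) : Set G) → t.card ≤ C

/-- `T` is a (nontrivial, minimal, inversion-free) splitting of `G` over the class
`𝒜`, relative to `𝓟`. -/
def IsSplittingOverRel (𝒜 𝓟 : Set (Subgroup G)) : Prop :=
  T.NoInversions ∧ T.NoGlobalFix ∧ T.Minimal ∧ T.EdgesIn 𝒜 ∧ T.Relative 𝓟

/-- `T` is a (nontrivial, minimal, inversion-free) splitting of `G` over the class
`𝒜` (not relative to any collection). -/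
def IsSplittingOver (𝒜 : Set (Subgroup G)) : Prop :=
  T.NoInversions ∧ T.NoGlobalFix ∧ T.Minimal ∧ T.EdgesIn 𝒜

end GTreeAction

/-- `G` splits over the class `𝒜` relative to `𝓟`. -/
def SplitsOverRel (G : Type u) [Group G] (𝒜 𝓟 : Set (Subgroup G)) : Prop :=
  ∃ T : GTreeAction G, T.IsSplittingOverRel 𝒜 𝓟

/-- `G` admits a `(k, C)`-acylindrical splitting over the class `𝒜` relative
to `𝓟`. -/
def SplitsOverRelAcyl (G : Type u) [Group G] (𝒜 𝓟 : Set (Subgroup G)) (k C : ℕ) : Prop :=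
  ∃ T : GTreeAction G, T.IsSplittingOverRel 𝒜 𝓟 ∧ T.Acyl k C

/-- `G` splits over the class `𝒜` (absolute version). -/
def SplitsOver (G : Type u) [Group G] (𝒜 : Set (Subgroup G)) : Prop :=
  ∃ T : GTreeAction G, T.IsSplittingOver 𝒜

/-- A proper (i.e. nontrivial) peripheral splitting of `(G, 𝓟)`: a minimal,
inversion-free action without global fixed point on a bipartite tree, such that the
vertex stabilizers of one color are precisely the conjugates of the members of `𝓟`. -/
def HasProperPeripheralSplitting (G : Type u) [Group G] (𝓟 : Set (Subgroup G)) : Prop :=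
  ∃ T : GTreeAction G, T.NoInversions ∧ T.NoGlobalFix ∧ T.Minimal ∧
    ∃ c : T.V → Bool,
      (∀ u v : T.V, T.graph.Adj u v → c u ≠ c v) ∧
      (∀ (g : G) (v : T.V), c (T.act g v) = c v) ∧
      ({H : Subgroup G | ∃ v : T.V, c v = true ∧ H = T.stab v} =
        {H : Subgroup G | ∃ P ∈ 𝓟, ∃ g : G, H = conjSubgroup g P})

/-- `G` is one-ended relative to `𝓟`: no nontrivial splitting over a finite subgroup
relative to `𝓟`. -/
def OneEndedRel (G : Type u) [Group G] (𝓟 : Set (Subgroup G)) : Prop :=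
  ¬ SplitsOverRel G {H : Subgroup G | Finite H} 𝓟

/-! ### Ends of groups -/

/-- The Cayley graph of `H` with respect to `S`. -/
def cayleyGraph (H : Type*) [Group H] (S : Set H) : SimpleGraph H :=
  SimpleGraph.fromRel (fun x y => x⁻¹ * y ∈ S)

/-- `H` (finitely generated) has more than one end: for some finite generating set,
removing some finite set of vertices of the Cayley graph leaves at least two infinite
connected components. -/
def HasMoreThanOneEnd (H : Type*) [Group H] : Prop :=
  ∃ S : Finset H, Subgroup.closure (S : Set H) = ⊤ ∧
    ∃ K : Finset H,
      ∃ c₁ c₂ : ((cayleyGraph H (S : Set H)).induce ((K : Set H)ᶜ)).ConnectedComponent,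
        c₁ ≠ c₂ ∧ c₁.supp.Infinite ∧ c₂.supp.Infinite

/-- A group is small if it contains no non-abelian free subgroup. -/
def IsSmall (H : Subgroup G) : Prop :=
  ¬ ∃ f : FreeGroup Bool →* G, Function.Injective f ∧ ∀ x, f x ∈ H

/-- A group is slender if all its subgroups are finitely generated. -/
def IsSlender (H : Type*) [Group H] : Prop :=
  ∀ K : Subgroup H, K.FG

/-- A polycyclic group: solvable, with every subgroup finitely generated. -/
def IsPolycyclic (H : Type*) [Group H] : Prop :=
  IsSolvable H ∧ IsSlender H

/-- A virtually polycyclic group. -/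
def IsVirtuallyPolycyclic (H : Type*) [Group H] : Prop :=
  ∃ K : Subgroup H, K.FiniteIndex ∧ IsPolycyclic K

/-! ### Dehn fillings -/

/-- The data of a Dehn filling of `(G, 𝓟)`: a choice of normal subgroup
`ker P ⊴ P` for each `P ∈ 𝓟`. -/
structure FillingKernels (G : Type u) [Group G] (𝓟 : Set (Subgroup G)) where
  /-- the filling kernels -/
  ker : Subgroup G → Subgroup G
  ker_le : ∀ P ∈ 𝓟, ker P ≤ P
  ker_norm : ∀ P ∈ 𝓟, ∀ p ∈ P, ∀ k ∈ ker P, p * k * p⁻¹ ∈ ker P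

namespace FillingKernels

variable {𝓟 : Set (Subgroup G)} (D : FillingKernels G 𝓟)

/-- The kernel of the filling: the normal closure of the union of the filling
kernels. -/
def K : Subgroup G := Subgroup.normalClosure (⋃ P ∈ 𝓟, ((D.ker P : Subgroup G) : Set G))

instance : (D.K).Normal := Subgroup.normalClosure_normal

/-- The filled group `Ḡ = G / K`. -/
def Filled : Type u := G ⧸ D.K

instance : Group D.Filled := inferInstanceAs (Group (G ⧸ D.K))

/-- The quotient map `G → Ḡ`. -/
def proj : G →* D.Filled := QuotientGroup.mk' D.K

/-- The image collection `𝓟̄`: the images of the members of `𝓟`. -/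
def fillPeriph : Set (Subgroup D.Filled) :=
  (fun P : Subgroup G => P.map D.proj) '' 𝓟

/-- The collection `𝓟̄^∞` of infinite members of `𝓟̄`. -/
def fillPeriphInf : Set (Subgroup D.Filled) :=
  {Q ∈ D.fillPeriph | Infinite Q}

/-- The filling avoids the finite set `B`. -/
def Avoids (B : Finset G) : Prop :=
  ∀ P ∈ 𝓟, ∀ b ∈ B, b ∉ D.ker P

/-- The filling is `𝓜`-finite: the filling kernel has finite index in every
peripheral subgroup which is finitely generated with more than one end. -/
def MFinite : Prop :=
  ∀ P ∈ 𝓟, (Group.FG P ∧ HasMoreThanOneEnd P) → ((D.ker P).subgroupOf P).FiniteIndex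

/-- The filling kernel is normal in `P`, as a subgroup of `P`. -/
theorem subNormal (P : Subgroup G) (hP : P ∈ 𝓟) : ((D.ker P).subgroupOf P).Normal := by
  constructor
  intro n hn g
  simp only [Subgroup.mem_subgroupOf] at hn ⊢
  simpa using D.ker_norm P hP g g.2 n hn

/-- The filling is co-slender: each `P / ker P` is slender. -/
def CoSlender : Prop :=
  ∀ P : Subgroup G, ∀ hP : P ∈ 𝓟,
    letI := D.subNormal P hP
    IsSlender (↥P ⧸ (D.ker P).subgroupOf P)

end FillingKernels

/-- A property `Q` holds for all sufficiently long fillings of `(G, 𝓟)`: there is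
a finite set `B ⊆ G \ {1}` such that `Q` holds for every filling whose kernels
avoid `B`. -/
def SuffLongFillings (G : Type u) [Group G] (𝓟 : Set (Subgroup G))
    (Q : FillingKernels G 𝓟 → Prop) : Prop :=
  ∃ B : Finset G, (1 : G) ∉ B ∧ ∀ D : FillingKernels G 𝓟, D.Avoids B → Q D

/-- A sequence of fillings is stably faithful: every nontrivial element of `G`
survives in all sufficiently late fillings. -/
def StablyFaithful {G : Type u} [Group G] {𝓟 : Set (Subgroup G)}
    (φ : ℕ → FillingKernels G 𝓟) : Prop :=
  ∀ g : G, g ≠ 1 → ∃ N : ℕ, ∀ i ≥ N, (φ i).proj g ≠ 1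

/-! ### ℝ-trees -/

/-- An ℝ-tree: a geodesic metric space in which every pair of points is joined by a
unique embedded arc. -/
structure IsRTree (X : Type*) [MetricSpace X] : Prop where
  geodesic : ∀ x y : X, ∃ f : ℝ → X, f 0 = x ∧ f (dist x y) = y ∧
    ∀ s ∈ Set.Icc (0 : ℝ) (dist x y), ∀ t ∈ Set.Icc (0 : ℝ) (dist x y),
      dist (f s) (f t) = |s - t|
  unique_arc : ∀ γ₁ γ₂ : Set.Icc (0 : ℝ) 1 → X, Continuous γ₁ → Continuous γ₂ →
    Function.Injective γ₁ → Function.Injective γ₂ →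
    γ₁ ⟨0, by norm_num⟩ = γ₂ ⟨0, by norm_num⟩ →
    γ₁ ⟨1, by norm_num⟩ = γ₂ ⟨1, by norm_num⟩ →
    Set.range γ₁ = Set.range γ₂

/-- An action of `G` by isometries on an ℝ-tree. -/
structure RTreeAction (G : Type u) [Group G] where
  /-- the underlying space -/
  X : Type u
  /-- the metric -/
  [metric : MetricSpace X]
  isRTree : IsRTree X
  /-- the action -/
  act : G → X → X
  isom : ∀ g : G, Isometry (act g)
  act_one : ∀ x : X, act 1 x = x
  act_mul : ∀ (g h : G) (x : X), act (g * h) x = act g (act h x)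

namespace RTreeAction

variable (T : RTreeAction G)

/-- Stabilizer of a point. -/
def stab (x : T.X) : Subgroup G where
  carrier := {g | T.act g x = x}
  one_mem' := T.act_one x
  mul_mem' := by
    intro a b ha hb
    simp only [Set.mem_setOf_eq] at *
    rw [T.act_mul, hb, ha]
  inv_mem' := by
    intro a ha
    simp only [Set.mem_setOf_eq] at *
    conv_lhs => rw [← ha]
    rw [← T.act_mul, inv_mul_cancel, T.act_one]

/-- The action has no global fixed point. -/
def NoGlobalFix : Prop := ¬ ∃ x : T.X, ∀ g : G, T.act g x = x

/-- The action is relative to `𝓟`: each member of `𝓟` fixes a point. -/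
def Relative (𝓟 : Set (Subgroup G)) : Prop :=
  ∀ P ∈ 𝓟, ∃ x : T.X, ∀ p ∈ P, T.act p x = x

/-- Arc stabilizers (pointwise stabilizers of nondegenerate arcs, which in an ℝ-tree
coincide with the stabilizers of their pairs of endpoints) are elementary. -/
def ElementaryArcStabs (𝓟 : Set (Subgroup G)) : Prop :=
  ∀ x y : T.X, x ≠ y → IsElementary 𝓟 (T.stab x ⊓ T.stab y)

end RTreeAction

end RelHypDehn

end

/-! Because `S ∩ P` generates `P` for each `P ∈ 𝓟`, any finitely many elements `a` of
`P₁ ∩ g P₂ g⁻¹` move the horoball points `(P₁, 1, n)` and `(P₂, g, n)` by at most one once the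
depth `n` is large. Unless the two horoballs coincide, a geodesic between these points leaves the
first horoball, hence passes through a Cayley vertex `u`, and the four-point condition forces each
`a` to move `u` by at most `2δ + 3`. So `u⁻¹ a u` ranges over a fixed ball of the locally finite
cusped space, whose size bounds `|P₁ ∩ g P₂ g⁻¹|`. -/

namespace SimpleGraph

variable {V W : Type*} {X : SimpleGraph V} {Y : SimpleGraph W}

theorem Hom.edist_le (f : X →g Y) (u v : V) : Y.edist (f u) (f v) ≤ X.edist u v := by
  by_cases h : X.Reachable u v
  · obtain ⟨w, hw⟩ := h.exists_walk_length_eq_edist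
    simpa [hw] using SimpleGraph.edist_le (w.map f)
  · exact edist_eq_top_of_not_reachable h ▸ le_top

theorem Iso.dist_eq (φ : X ≃g Y) (u v : V) : Y.dist (φ u) (φ v) = X.dist u v := by
  refine congrArg ENat.toNat (le_antisymm (φ.toHom.edist_le u v) ?_)
  simpa using φ.symm.toHom.edist_le (φ u) (φ v)

theorem Walk.exists_mem_support_of_separates {u v : V} {H C : Set V}
    (hH : ∀ x ∈ H, ∀ y, X.Adj x y → y ∈ H ∨ y ∈ C)
    (w : X.Walk u v) (hu : u ∈ H) (hv : v ∉ H) : ∃ z ∈ w.support, z ∈ C := by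
  obtain ⟨d, hd, hfst, hsnd⟩ := w.exists_boundary_dart H hu hv
  exact ⟨d.snd, w.dart_snd_mem_support_of_mem_darts hd,
    (hH _ hfst _ d.adj).resolve_left hsnd⟩

theorem dist_add_dist_of_mem_support_of_length_eq_dist (hconn : X.Connected) {u v x : V}
    (w : X.Walk u v) (hw : w.length = X.dist u v) (hx : x ∈ w.support) :
    X.dist u x + X.dist x v = X.dist u v := by
  classical
  have h₁ := dist_le (w.takeUntil x hx)
  have h₂ := dist_le (w.dropUntil x hx)
  have hlen := congrArg Walk.length (w.take_spec hx)
  rw [Walk.length_append] at hlen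
  have := hconn.dist_triangle (u := u) (v := x) (w := v)
  omega

theorem finite_setOf_dist_le (hconn : X.Connected) (hX : ∀ v, (X.neighborSet v).Finite)
    (o : V) (k : ℕ) : {v | X.dist o v ≤ k}.Finite := by
  suffices h : {v | ∃ w : X.Walk v o, w.length ≤ k}.Finite by
    refine h.subset fun v hv => ?_
    obtain ⟨w, hw⟩ := hconn.exists_walk_length_eq_dist v o
    exact ⟨w, hw ▸ dist_comm (G := X) ▸ hv⟩
  induction k with
  | zero =>
    refine (Set.finite_singleton o).subset fun v ⟨w, hw⟩ => ?_
    exact w.eq_of_length_eq_zero (Nat.le_zero.mp hw)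
  | succ k ih =>
    refine (ih.union (ih.biUnion fun u _ => hX u)).subset ?_
    rintro v ⟨_ | ⟨h, w⟩, hw⟩
    · exact Or.inl ⟨.nil, Nat.zero_le _⟩
    · exact Or.inr (Set.mem_biUnion (x := _) ⟨w, by simpa using hw⟩ h.symm)

end SimpleGraph

namespace RelHypDehn

open SimpleGraph

def FourPointCondition {V : Type*} (X : SimpleGraph V) (δ : ℝ) : Prop :=
  ∀ x y z w : V, min (gromovProd X x z w) (gromovProd X z y w) - δ ≤ gromovProd X x y w

theorem dist_apply_le_of_dist_add_dist_eq {V : Type*} {X : SimpleGraph V} (hconn : X.Connected)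
    {δ : ℝ} (hδ : FourPointCondition X δ) (φ : X ≃g X) {a b p : V}
    (hp : X.dist a p + X.dist p b = X.dist a b)
    (ha : X.dist a (φ a) ≤ 1) (hb : X.dist b (φ b) ≤ 1) :
    (X.dist p (φ p) : ℝ) ≤ 2 * δ + 3 := by
  have tri (x y z : V) : (X.dist x z : ℝ) ≤ X.dist x y + X.dist y z := by
    exact_mod_cast hconn.dist_triangle
  have symm (x y : V) : (X.dist x y : ℝ) = X.dist y x := by rw [dist_comm]
  have iso (x y : V) : (X.dist (φ x) (φ y) : ℝ) = X.dist x y := by rw [φ.dist_eq]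
  have hp' : (X.dist a p : ℝ) + X.dist p b = X.dist a b := by exact_mod_cast hp
  have ha' : (X.dist a (φ a) : ℝ) ≤ 1 := by exact_mod_cast ha
  have hb' : (X.dist b (φ b) : ℝ) ≤ 1 := by exact_mod_cast hb
  have hap : (X.dist p (φ p) - 1) / 2 ≤ gromovProd X (φ a) (φ p) p := by
    unfold gromovProd
    linarith [tri a (φ a) p, symm a p, symm (φ p) p, iso a p]
  have hpb : (X.dist p (φ p) - 1) / 2 ≤ gromovProd X (φ p) (φ b) p := by
    unfold gromovProd
    linarith [tri b (φ b) p, symm b p, symm (φ p) p, symm (φ p) (φ b), iso b p]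
  have hab : gromovProd X (φ a) (φ b) p ≤ 1 := by
    unfold gromovProd
    linarith [tri (φ a) a p, tri (φ b) b p, symm (φ a) a, symm (φ b) b, symm b p, iso a b]
  linarith [le_min hap hpb, hδ (φ a) (φ b) (φ p) p]

variable {G : Type u} [Group G]

theorem wordBall_mono {T : Set G} : Monotone (wordBall T) :=
  fun _ _ hk _ ⟨l, hl, hT, hprod⟩ => ⟨l, hl.trans hk, hT, hprod⟩

theorem wordBall_subset {P : Subgroup G} {T : Set G} (hT : T ⊆ P) (k : ℕ) :
    wordBall T k ⊆ P := by
  rintro _ ⟨l, -, hl, rfl⟩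
  refine list_prod_mem fun x hx => ?_
  rcases hl x hx with h | h
  · exact hT h
  · exact P.inv_mem_iff.mp (hT h)

theorem wordBall_finite {T : Set G} (hT : T.Finite) (k : ℕ) : (wordBall T k).Finite := by
  have : Finite ↥(T ∪ T⁻¹) := (hT.union hT.inv).to_subtype
  refine ((List.finite_length_le ↥(T ∪ T⁻¹) k).image fun l => (l.map (↑)).prod).subset ?_
  rintro _ ⟨l, hlen, hl, rfl⟩
  lift l to List ↥(T ∪ T⁻¹) using fun a ha => hl a ha
  exact ⟨l, by simpa using hlen, rfl⟩

theorem exists_mem_wordBall_of_mem_closure {T : Set G} {g : G}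
    (h : g ∈ Subgroup.closure T) : ∃ k, g ∈ wordBall T k := by
  rw [← Subgroup.mem_toSubmonoid, Subgroup.closure_toSubmonoid] at h
  obtain ⟨l, hl, hprod⟩ := Submonoid.exists_list_of_mem_closure h
  exact ⟨l.length, l, le_rfl, fun a ha => (hl a ha).imp_right Set.mem_inv.mp, hprod⟩

theorem exists_subset_wordBall_of_subset_closure {T : Set G} {t : Finset G}
    (ht : (t : Set G) ⊆ Subgroup.closure T) : ∃ k, (t : Set G) ⊆ wordBall T k :=
  wordBall_mono.directed_le.exists_mem_subset_of_finset_subset_biUnion fun _ ha =>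
    Set.mem_iUnion.mpr (exists_mem_wordBall_of_mem_closure (ht ha))

theorem exists_wordBall_two_pow_of_mem_closure {T₁ T₂ : Set G} {g : G} {t : Finset G}
    (h₁ : ∀ a ∈ t, a ∈ Subgroup.closure T₁)
    (h₂ : ∀ a ∈ t, g⁻¹ * a * g ∈ Subgroup.closure T₂) :
    ∃ n, ∀ a ∈ t, a ∈ wordBall T₁ (2 ^ (n + 1)) ∧ g⁻¹ * a * g ∈ wordBall T₂ (2 ^ (n + 1)) := by
  classical
  obtain ⟨k₁, hk₁⟩ := exists_subset_wordBall_of_subset_closure h₁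
  obtain ⟨k₂, hk₂⟩ := exists_subset_wordBall_of_subset_closure (t := t.image (g⁻¹ * · * g))
    (by rw [Finset.coe_image, Set.image_subset_iff]; exact h₂)
  have hle {k : ℕ} (hk : k ≤ max k₁ k₂) : k ≤ 2 ^ (max k₁ k₂ + 1) :=
    (hk.trans (Nat.le_succ _)).trans Nat.lt_two_pow_self.le
  refine ⟨max k₁ k₂, fun a ha => ⟨?_, ?_⟩⟩
  · exact wordBall_mono (hle (le_max_left _ _)) (hk₁ ha)
  · exact wordBall_mono (hle (le_max_right _ _))
      (hk₂ (Finset.mem_coe.mpr (Finset.mem_image_of_mem _ ha)))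

theorem mem_conjSubgroup_iff {g a : G} {P : Subgroup G} :
    a ∈ conjSubgroup g P ↔ g⁻¹ * a * g ∈ P := by
  rw [conjSubgroup, Subgroup.mem_map_equiv]
  simp [MulAut.conj_symm_apply, mul_assoc]

section Cusped

variable {𝓟 : Set (Subgroup G)} {S : Set G}

theorem cuspedGraph_adj {u v : CuspedVertex G 𝓟} :
    (cuspedGraph 𝓟 S).Adj u v ↔ u ≠ v ∧ (cuspedRel 𝓟 S u v ∨ cuspedRel 𝓟 S v u) :=
  fromRel_adj _ _ _

def translate (c : G) : Equiv.Perm (CuspedVertex G 𝓟) :=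
  .sumCongr (.mulLeft c) (.prodCongr (.refl _) (.prodCongr (.mulLeft c) (.refl _)))

@[simp] theorem translate_inl (c x : G) :
    translate (𝓟 := 𝓟) c (.inl x) = .inl (c * x) := rfl

@[simp] theorem translate_inr (c : G) (P : 𝓟) (x : G) (n : ℕ) :
    translate c (.inr (P, x, n)) = .inr (P, c * x, n) := rfl

theorem cuspedRel_translate (c : G) (u v : CuspedVertex G 𝓟) :
    cuspedRel 𝓟 S (translate c u) (translate c v) ↔ cuspedRel 𝓟 S u v := by
  rcases u with x | ⟨P, x, n⟩ <;> rcases v with y | ⟨Q, y, m⟩ <;>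
    simp [cuspedRel, mul_assoc]

def translateIso (c : G) : cuspedGraph 𝓟 S ≃g cuspedGraph 𝓟 S where
  toEquiv := translate c
  map_rel_iff' {_ _} := by
    simp only [cuspedGraph_adj, cuspedRel_translate, (translate c).injective.ne_iff]

theorem dist_translate (c : G) (u v : CuspedVertex G 𝓟) :
    (cuspedGraph 𝓟 S).dist (translate c u) (translate c v) = (cuspedGraph 𝓟 S).dist u v :=
  (translateIso c).dist_eq u v

theorem reachable_inl_inl_mul {s : G} (hs : s ∈ S) (x : G) :
    (cuspedGraph 𝓟 S).Reachable (.inl x) (.inl (x * s)) := by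
  by_cases h : s = 1
  · simp [h]
  refine Adj.reachable (cuspedGraph_adj.mpr ⟨by simpa using h, Or.inl ?_⟩)
  simpa [cuspedRel] using hs

theorem reachable_inl_one (hS : Subgroup.closure S = ⊤) (x : G) :
    (cuspedGraph 𝓟 S).Reachable (.inl 1) (.inl x) := by
  suffices h : ∀ y, (cuspedGraph 𝓟 S).Reachable (.inl y) (.inl (y * x)) by
    simpa using h 1
  induction (hS ▸ Subgroup.mem_top x : x ∈ Subgroup.closure S) using
    Subgroup.closure_induction with
  | mem s hs => exact reachable_inl_inl_mul hs
  | one => simp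
  | mul a b _ _ ha hb => exact fun y => (ha y).trans (by simpa [mul_assoc] using hb (y * a))
  | inv a _ ha => exact fun y => by simpa using (ha (y * a⁻¹)).symm

theorem reachable_inr_inl (P : 𝓟) (x : G) (n : ℕ) :
    (cuspedGraph 𝓟 S).Reachable (.inr (P, x, n)) (.inl x) := by
  induction n with
  | zero => exact Adj.reachable (cuspedGraph_adj.mpr ⟨by simp, Or.inl (by simp [cuspedRel])⟩)
  | succ n ih =>
    exact (Adj.reachable (cuspedGraph_adj.mpr ⟨by simp, Or.inr (by simp [cuspedRel])⟩)).trans ih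

theorem cuspedGraph_connected (hS : Subgroup.closure S = ⊤) :
    (cuspedGraph 𝓟 S).Connected := by
  have h : ∀ v, (cuspedGraph 𝓟 S).Reachable (.inl 1) v := by
    rintro (x | ⟨P, x, n⟩)
    · exact reachable_inl_one hS x
    · exact (reachable_inl_one hS x).trans (reachable_inr_inl P x n).symm
  exact (connected_iff _).mpr ⟨fun u v => (h u).symm.trans (h v), ⟨.inl 1⟩⟩

theorem finite_neighborSet_inl (h𝓟 : 𝓟.Finite) (hS : S.Finite) (x : G) :
    ((cuspedGraph 𝓟 S).neighborSet (.inl x)).Finite := by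
  have := h𝓟.to_subtype
  refine (((hS.union hS.inv).image fun s => .inl (x * s)).union
    (Set.finite_range fun P : 𝓟 => .inr (P, x, 0))).subset ?_
  rintro (y | ⟨Q, y, m⟩) hv <;> obtain ⟨-, h | h⟩ := cuspedGraph_adj.mp hv
  · exact .inl ⟨x⁻¹ * y, .inl h, by simp⟩
  · exact .inl ⟨x⁻¹ * y, .inr (by simpa [cuspedRel] using h), by simp⟩
  · obtain ⟨rfl, rfl⟩ := h
    exact .inr ⟨Q, rfl⟩
  · obtain ⟨rfl, rfl⟩ := h
    exact .inr ⟨Q, rfl⟩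

theorem finite_neighborSet_inr (hS : S.Finite) (P : 𝓟) (x : G) (n : ℕ) :
    ((cuspedGraph 𝓟 S).neighborSet (.inr (P, x, n))).Finite := by
  have hW := wordBall_finite (hS.inter_of_left (P : Set G)) (2 ^ (n + 1))
  refine ((Set.toFinite {.inl x, .inr (P, x, n + 1), .inr (P, x, n - 1)}).union
    ((hW.union hW.inv).image fun h => .inr (P, x * h, n))).subset ?_
  rintro (y | ⟨Q, y, m⟩) hv <;> obtain ⟨-, h | h⟩ := cuspedGraph_adj.mp hv
  · obtain ⟨rfl, -⟩ := h
    exact .inl (.inl rfl)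
  · obtain ⟨rfl, -⟩ := h
    exact .inl (.inl rfl)
  · obtain ⟨rfl, ⟨rfl, rfl⟩ | ⟨rfl, hw⟩⟩ := h
    · exact .inl (.inr (.inl rfl))
    · exact .inr ⟨x⁻¹ * y, .inl hw, by simp⟩
  · obtain ⟨rfl, ⟨rfl, rfl⟩ | ⟨rfl, hw⟩⟩ := h
    · exact .inl (.inr (.inr (by simp)))
    · exact .inr ⟨x⁻¹ * y, .inr (by simpa using hw), by simp⟩

theorem finite_neighborSet (h𝓟 : 𝓟.Finite) (hS : S.Finite) (v : CuspedVertex G 𝓟) :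
    ((cuspedGraph 𝓟 S).neighborSet v).Finite := by
  rcases v with x | ⟨P, x, n⟩
  · exact finite_neighborSet_inl h𝓟 hS x
  · exact finite_neighborSet_inr hS P x n

def horoball (P : 𝓟) : Set (CuspedVertex G 𝓟) :=
  {v | ∃ x ∈ (P : Subgroup G), ∃ n, v = .inr (P, x, n)}

theorem mem_horoball_or_inl_of_adj {P : 𝓟} {u v : CuspedVertex G 𝓟}
    (hu : u ∈ horoball P) (huv : (cuspedGraph 𝓟 S).Adj u v) :
    v ∈ horoball P ∨ v ∈ Set.range Sum.inl := by
  obtain ⟨x, hx, n, rfl⟩ := hu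
  rcases v with y | ⟨Q, y, m⟩
  · exact .inr ⟨y, rfl⟩
  have hW : ∀ k, wordBall (S ∩ (P : Set G)) k ⊆ P := wordBall_subset Set.inter_subset_right
  obtain ⟨-, ⟨rfl, ⟨rfl, -⟩ | ⟨-, hw⟩⟩ | ⟨rfl, ⟨rfl, -⟩ | ⟨-, hw⟩⟩⟩ := cuspedGraph_adj.mp huv
  · exact .inl ⟨x, hx, _, rfl⟩
  · exact .inl ⟨y, by simpa using mul_mem hx (hW _ hw), _, rfl⟩
  · exact .inl ⟨y, hx, _, rfl⟩
  · exact .inl ⟨y, by simpa using mul_mem hx (inv_mem (hW _ hw)), _, rfl⟩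

theorem dist_inr_inr_le_one (P : 𝓟) {x y : G} (n : ℕ)
    (h : x⁻¹ * y ∈ wordBall (S ∩ (P : Set G)) (2 ^ (n + 1))) :
    (cuspedGraph 𝓟 S).dist (.inr (P, x, n)) (.inr (P, y, n)) ≤ 1 := by
  by_cases hxy : x = y
  · simp [hxy]
  · refine (dist_eq_one_iff_adj.mpr ?_).le
    exact cuspedGraph_adj.mpr ⟨by simp [hxy], .inl ⟨rfl, .inr ⟨rfl, h⟩⟩⟩

end Cusped

variable {𝓟 : Set (Subgroup G)} {S : Finset G}

theorem exists_conj_dist_le (hS : Adapted G 𝓟 S) {δ : ℝ}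
    (hδ : FourPointCondition (cuspedGraph 𝓟 S) δ)
    {P₁ P₂ : Subgroup G} (h₁ : P₁ ∈ 𝓟) (h₂ : P₂ ∈ 𝓟) {g : G} (hg : ¬(P₁ = P₂ ∧ g ∈ P₁))
    {t : Finset G} (ht : (t : Set G) ⊆ P₁ ⊓ conjSubgroup g P₂) :
    ∃ u : G, ∀ a ∈ t,
      ((cuspedGraph 𝓟 S).dist (.inl 1) (.inl (u⁻¹ * a * u)) : ℝ) ≤ 2 * δ + 3 := by
  have hconn := cuspedGraph_connected (𝓟 := 𝓟) hS.1
  obtain ⟨n, hn⟩ := exists_wordBall_two_pow_of_mem_closure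
    (fun a ha => hS.2 P₁ h₁ ▸ (ht ha).1)
    (fun a ha => hS.2 P₂ h₂ ▸ mem_conjSubgroup_iff.mp (ht ha).2)
  let A : CuspedVertex G 𝓟 := .inr (⟨P₁, h₁⟩, 1, n)
  let B : CuspedVertex G 𝓟 := .inr (⟨P₂, h₂⟩, g, n)
  have hA : A ∈ horoball ⟨P₁, h₁⟩ := ⟨1, one_mem _, n, rfl⟩
  have hB : B ∉ horoball ⟨P₁, h₁⟩ := by
    rintro ⟨x, hx, _, h⟩
    simp only [B, Sum.inr.injEq, Prod.mk.injEq, Subtype.mk.injEq] at h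
    obtain ⟨rfl, rfl, -⟩ := h
    exact hg ⟨rfl, hx⟩
  obtain ⟨w, hw⟩ := hconn.exists_walk_length_eq_dist A B
  obtain ⟨_, hu, u, rfl⟩ :=
    w.exists_mem_support_of_separates (fun _ hx _ => mem_horoball_or_inl_of_adj hx) hA hB
  refine ⟨u, fun a ha => ?_⟩
  have hdist := dist_apply_le_of_dist_add_dist_eq hconn hδ (translateIso a)
    (dist_add_dist_of_mem_support_of_length_eq_dist hconn w hw hu)
    (dist_inr_inr_le_one _ n (by simpa using (hn a ha).1))
    (dist_inr_inr_le_one _ n (by simpa [mul_assoc] using (hn a ha).2))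
  rw [← dist_translate u⁻¹] at hdist
  simpa [translateIso, mul_assoc] using hdist

end RelHypDehn

open RelHypDehn in
/-- **Lemma 2.14** ([GM, Lemma 3.3]).  If `(G, 𝓟)` is a relatively hyperbolic
group pair, then `𝓟` is `C`-almost malnormal for some constant `C`. -/
theorem peripheral_collection_almost_malnormal
    {G : Type u} [Group G] (𝓟 : Set (Subgroup G))
    (hRH : IsRelHyp G 𝓟) :
    ∃ C : ℕ, AlmostMalnormal 𝓟 C := by
  obtain ⟨h𝓟, -, S, hS, δ, -, hδ⟩ := hRH
  have hball := SimpleGraph.finite_setOf_dist_le (cuspedGraph_connected hS.1)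
    (finite_neighborSet h𝓟 S.finite_toSet) (.inl 1) ⌈2 * δ + 3⌉₊
  refine ⟨hball.toFinset.card, fun P₁ h₁ P₂ h₂ g ⟨t, ht, hcard⟩ => ?_⟩
  by_contra hg
  obtain ⟨u, hu⟩ := exists_conj_dist_le hS hδ h₁ h₂ hg ht
  refine hcard.not_ge (Finset.card_le_card_of_injOn (fun a => .inl (u⁻¹ * a * u))
    (fun a ha => ?_) fun a _ b _ hab => by simpa using hab)
  simpa using (Nat.cast_le (α := ℝ)).mp ((hu a ha).trans (Nat.le_ceil _))
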